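/- arXiv:0807.4501 — 2 statements merged into one kernel-verified Lean document; each statement's English description precedes it below -/
import Mathlib

section
/- If f = K_μ for some complex Borel measure μ on the unit circle T, i.e. f(z) = ∫_T (1/(ξ - z) - ξ/(1 - ξz)) dμ(ξ), then the function (f ∘ φ_a) · φ_a' also belongs to the class K, where φ_a(z) = (z + a)/(1 + za) for real a with -1 < a < 1. -/
/-!
On the circle the kernel splits as `Kker ξ z = 1/(ξ - z) - 1/(ξ⁻¹ - z)`, and `φ_a` commutes
with `u ↦ u⁻¹`. Since `φ_a'(z) / (φ_a u - φ_a z) = 1/(u - z) + a/(1 + z a)`, the constant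
term cancels in the difference, so `Kker (φ_a η) (φ_a z) · φ_a'(z) = Kker η z` for `‖η‖ = 1`.
Hence `f ∘ φ_a · φ_a'` is represented by the pushforward of `w dP` under `φ_{-a} = φ_a⁻¹`,
which is still carried by the circle.
-/

open MeasureTheory Metric Complex

/-- The Cauchy-type kernel `1/(ξ - z) - ξ/(1 - ξ z)`. -/
noncomputable def Kker (ξ z : ℂ) : ℂ := 1 / (ξ - z) - ξ / (1 - ξ * z)

/-- `f ∈ K`: `f = K_μ` on the unit disk for some complex Borel measure `μ` on the unit
circle, encoded by its polar decomposition `dμ = w dP` with `P` a finite positive measure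
concentrated on the circle and `w` an integrable density. -/
def MemK (f : ℂ → ℂ) : Prop :=
  ∃ (P : Measure ℂ) (w : ℂ → ℂ), IsFiniteMeasure P ∧ (∀ᵐ ξ ∂P, ‖ξ‖ = 1) ∧
    Integrable w P ∧ ∀ z ∈ ball (0 : ℂ) 1, f z = ∫ ξ, Kker ξ z * w ξ ∂P

noncomputable def mobius (a : ℝ) (z : ℂ) : ℂ := (z + a) / (1 + z * a)

lemma Kker_eq_sub_inv {ξ : ℂ} (hξ : ξ ≠ 0) (z : ℂ) :
    Kker ξ z = 1 / (ξ - z) - 1 / (ξ⁻¹ - z) := by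
  rw [Kker, inv_eq_one_div, div_sub' hξ, one_div_div]

lemma measurable_Kker (z : ℂ) : Measurable fun ξ => Kker ξ z := by
  unfold Kker; fun_prop

lemma measurable_mobius (a : ℝ) : Measurable (mobius a) := by
  unfold mobius; fun_prop

lemma hasDerivAt_mobius (a : ℝ) {z : ℂ} (hz : 1 + z * a ≠ 0) :
    HasDerivAt (mobius a) ((1 - a ^ 2) / (1 + z * a) ^ 2) z :=
  (((hasDerivAt_id z).add_const (a : ℂ)).div
    (((hasDerivAt_id z).mul_const (a : ℂ)).const_add 1) hz).congr_deriv (by simp only [id]; ring)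

lemma mobius_inv (a : ℝ) {u : ℂ} (hu : u ≠ 0) : mobius a u⁻¹ = (mobius a u)⁻¹ := by
  rw [mobius, mobius, inv_div, ← div_div_div_cancel_right₀ hu (1 + u * a)]
  congr 1 <;> field_simp

lemma mobius_sub_mobius (a : ℝ) {u z : ℂ} (hu : 1 + u * a ≠ 0) (hz : 1 + z * a ≠ 0) :
    mobius a u - mobius a z = (1 - a ^ 2) * (u - z) / ((1 + u * a) * (1 + z * a)) := by
  rw [mobius, mobius, div_sub_div _ _ hu hz]
  ring

section

variable {a : ℝ} (ha : a ^ 2 ≠ 1)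
include ha

lemma mobius_mobius_neg {ξ : ℂ} (hξ : 1 - ξ * a ≠ 0) : mobius a (mobius (-a) ξ) = ξ := by
  have hden : 1 - ξ * a + (ξ - a) * a = 1 - (a : ℂ) ^ 2 := by ring
  rw [mobius, mobius, ofReal_neg, ← sub_eq_add_neg, mul_neg, ← sub_eq_add_neg, div_add' _ _ _ hξ,
    div_mul_eq_mul_div, one_add_div hξ, div_div_div_cancel_right₀ hξ, div_eq_iff]
  · ring
  · rw [hden]; exact_mod_cast sub_ne_zero.2 (Ne.symm ha)

lemma one_div_mobius_sub_mobius_mul_deriv {u z : ℂ} (hu : 1 + u * a ≠ 0) (hz : 1 + z * a ≠ 0)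
    (huz : u ≠ z) :
    1 / (mobius a u - mobius a z) * ((1 - a ^ 2) / (1 + z * a) ^ 2) =
      1 / (u - z) + a / (1 + z * a) := by
  have hsq : (1 : ℂ) - a ^ 2 ≠ 0 := by exact_mod_cast sub_ne_zero.2 (Ne.symm ha)
  have hz' : 1 + (a : ℂ) * z ≠ 0 := by rwa [mul_comm]
  rw [mobius_sub_mobius a hu hz]
  field_simp [sub_ne_zero.2 huz]
  ring

end

lemma sq_norm_one_add_mul_sub_sq_norm_add (a : ℝ) (z : ℂ) :
    ‖1 + z * a‖ ^ 2 - ‖z + a‖ ^ 2 = (1 - a ^ 2) * (1 - ‖z‖ ^ 2) := by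
  simp only [Complex.sq_norm, normSq_apply, add_re, add_im, mul_re, mul_im, ofReal_re, ofReal_im,
    one_re, one_im]
  ring

section

variable {a : ℝ} (ha : |a| < 1)
include ha

lemma one_add_mul_ofReal_ne_zero {z : ℂ} (hz : ‖z‖ ≤ 1) : 1 + z * a ≠ 0 := by
  have hlt : ‖z * (a : ℂ)‖ < 1 := by
    rw [norm_mul, norm_real, Real.norm_eq_abs]
    exact mul_lt_one_of_nonneg_of_lt_one_right hz (abs_nonneg a) ha
  intro h
  rw [← neg_eq_of_add_eq_zero_right h, norm_neg, norm_one] at hlt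
  exact lt_irrefl _ hlt

lemma norm_mobius_lt_one {z : ℂ} (hz : ‖z‖ < 1) : ‖mobius a z‖ < 1 := by
  have hden := one_add_mul_ofReal_ne_zero ha hz.le
  have hpos : 0 < (1 - a ^ 2) * (1 - ‖z‖ ^ 2) := by
    apply mul_pos <;> nlinarith [norm_nonneg z, (sq_lt_one_iff_abs_lt_one a).2 ha]
  rw [mobius, norm_div, div_lt_one (norm_pos_iff.2 hden),
    ← sq_lt_sq₀ (norm_nonneg _) (norm_nonneg _)]
  linarith [sq_norm_one_add_mul_sub_sq_norm_add a z]

lemma norm_mobius_of_norm_eq_one {ξ : ℂ} (hξ : ‖ξ‖ = 1) : ‖mobius a ξ‖ = 1 := by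
  have hden := one_add_mul_ofReal_ne_zero ha hξ.le
  have hdiff := sq_norm_one_add_mul_sub_sq_norm_add a ξ
  rw [hξ] at hdiff
  rw [mobius, norm_div, div_eq_one_iff_eq (norm_ne_zero_iff.2 hden),
    ← sq_eq_sq₀ (norm_nonneg _) (norm_nonneg _)]
  linarith

lemma Kker_mobius_mul_deriv {η z : ℂ} (hη : ‖η‖ = 1) (hz : ‖z‖ < 1) :
    Kker (mobius a η) (mobius a z) * ((1 - a ^ 2) / (1 + z * a) ^ 2) = Kker η z := by
  have ha2 : a ^ 2 ≠ 1 := ((sq_lt_one_iff_abs_lt_one a).2 ha).ne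
  have key : ∀ u : ℂ, ‖u‖ = 1 → 1 / (mobius a u - mobius a z) * ((1 - a ^ 2) / (1 + z * a) ^ 2)
      = 1 / (u - z) + a / (1 + z * a) := fun u hu =>
    one_div_mobius_sub_mobius_mul_deriv ha2 (one_add_mul_ofReal_ne_zero ha hu.le)
      (one_add_mul_ofReal_ne_zero ha hz.le) (by rintro rfl; linarith)
  have hη₀ : η ≠ 0 := norm_ne_zero_iff.1 (by rw [hη]; exact one_ne_zero)
  have hφη₀ : mobius a η ≠ 0 :=
    norm_ne_zero_iff.1 (by rw [norm_mobius_of_norm_eq_one ha hη]; exact one_ne_zero)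
  rw [Kker_eq_sub_inv hφη₀, Kker_eq_sub_inv hη₀, ← mobius_inv a hη₀, sub_mul, key η hη,
    key η⁻¹ (by rw [norm_inv, hη, inv_one])]
  ring

lemma map_mobius_map_mobius_neg {P : Measure ℂ} (hP : ∀ᵐ ξ ∂P, ‖ξ‖ = 1) :
    (P.map (mobius (-a))).map (mobius a) = P := by
  rw [Measure.map_map (measurable_mobius a) (measurable_mobius (-a))]
  conv_rhs => rw [← Measure.map_id (μ := P)]
  refine Measure.map_congr ?_
  filter_upwards [hP] with ξ hξ
  refine mobius_mobius_neg ((sq_lt_one_iff_abs_lt_one a).2 ha).ne ?_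
  simpa [sub_eq_add_neg] using one_add_mul_ofReal_ne_zero (a := -a) (by rwa [abs_neg]) hξ.le

lemma ae_norm_eq_one_map_mobius {P : Measure ℂ} (hP : ∀ᵐ ξ ∂P, ‖ξ‖ = 1) :
    ∀ᵐ η ∂P.map (mobius a), ‖η‖ = 1 := by
  rw [ae_map_iff (measurable_mobius a).aemeasurable
    (measurableSet_eq_fun measurable_norm measurable_const)]
  filter_upwards [hP] with ξ hξ using norm_mobius_of_norm_eq_one ha hξ

end

theorem stmt0 (a : ℝ) (ha : -1 < a) (ha' : a < 1) (f : ℂ → ℂ) (hf : MemK f) :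
    MemK (fun z => f ((z + a) / (1 + z * a)) *
      deriv (fun u : ℂ => (u + a) / (1 + u * a)) z) := by
  change MemK fun z => f (mobius a z) * deriv (mobius a) z
  obtain ⟨P, w, _, hP, hw, hf⟩ := hf
  have ha₁ : |a| < 1 := abs_lt.2 ⟨ha, ha'⟩
  have hQ := map_mobius_map_mobius_neg ha₁ hP
  have hQ_circle := ae_norm_eq_one_map_mobius (a := -a) (by rwa [abs_neg]) hP
  set Q := P.map (mobius (-a))
  refine ⟨Q, w ∘ mobius a, inferInstance, hQ_circle,
    (hQ ▸ hw).comp_measurable (measurable_mobius a), fun z hz => ?_⟩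
  rw [mem_ball_zero_iff] at hz
  have hint : AEStronglyMeasurable (fun ξ => Kker ξ (mobius a z) * w ξ) (Q.map (mobius a)) :=
    hQ ▸ ((measurable_Kker _).aestronglyMeasurable.mul hw.1)
  calc f (mobius a z) * deriv (mobius a) z
      = (∫ ξ, Kker ξ (mobius a z) * w ξ ∂P) * ((1 - a ^ 2) / (1 + z * a) ^ 2) := by
        rw [hf _ (mem_ball_zero_iff.2 (norm_mobius_lt_one ha₁ hz)),
          (hasDerivAt_mobius a (one_add_mul_ofReal_ne_zero ha₁ hz.le)).deriv]
    _ = ∫ η, Kker (mobius a η) (mobius a z) * w (mobius a η) *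
          ((1 - a ^ 2) / (1 + z * a) ^ 2) ∂Q := by
        rw [integral_mul_const, ← integral_map (measurable_mobius a).aemeasurable hint, hQ]
    _ = ∫ η, Kker η z * (w ∘ mobius a) η ∂Q := by
        refine integral_congr_ae ?_
        filter_upwards [hQ_circle] with η hη
        rw [Function.comp_apply, ← Kker_mobius_mul_deriv ha₁ hη hz]
        ring
end

section
/- If f ∈ J, i.e. f = J_μ for some complex Borel measure μ on the unit circle, then f' belongs to the class F_1, i.e. f'(z) = ∫_T 1/(1 - conj(ξ)z) dν(ξ) for some complex Borel measure ν on T. -/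
/-! Differentiating under the integral sign gives
`J_μ'(z) = ∫ (conj ξ / (1 - conj ξ z) - ξ / (1 - ξ z)) dμ(ξ)`, the derivative of the kernel being
bounded by `2 / (1 - |z|)`. The first term is in `F₁` with measure `conj ξ dμ(ξ)`; the second
becomes a Cauchy integral after pushing `-ξ dμ(ξ)` forward by `ξ ↦ conj ξ`. Finally `F₁` is
closed under sums: densities `w₁ dP₁`, `w₂ dP₂` are combined on `P₁ + P₂` via Radon–Nikodym
derivatives.
-/

open MeasureTheory Metric Complex

/-- The logarithmic kernel `log((1 - ξ z)/(1 - conj ξ z))` (principal branch, which is the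
analytic branch vanishing at `z = 0` when `‖ξ‖ = 1`, `‖z‖ < 1`). -/
noncomputable def Jker (ξ z : ℂ) : ℂ :=
  Complex.log ((1 - ξ * z) / (1 - (starRingEnd ℂ) ξ * z))

/-- `f ∈ J`: `f = J_μ` on the unit disk for some complex Borel measure on the unit circle,
encoded by a finite positive measure `P` concentrated on the circle and an integrable
density `w` (`dμ = w dP`). -/
def MemJ (f : ℂ → ℂ) : Prop :=
  ∃ (P : Measure ℂ) (w : ℂ → ℂ), IsFiniteMeasure P ∧ (∀ᵐ ξ ∂P, ‖ξ‖ = 1) ∧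
    Integrable w P ∧ ∀ z ∈ ball (0 : ℂ) 1, f z = ∫ ξ, Jker ξ z * w ξ ∂P

/-- `g ∈ F₁`: `g(z) = ∫ (1 - conj ξ · z)⁻¹ dν(ξ)` for some complex Borel measure `ν` on
the circle. -/
def MemF1 (g : ℂ → ℂ) : Prop :=
  ∃ (P : Measure ℂ) (w : ℂ → ℂ), IsFiniteMeasure P ∧ (∀ᵐ ξ ∂P, ‖ξ‖ = 1) ∧
    Integrable w P ∧
    ∀ z ∈ ball (0 : ℂ) 1, g z = ∫ ξ, (1 - (starRingEnd ℂ) ξ * z)⁻¹ * w ξ ∂P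

open ComplexConjugate

section DiskBounds

variable {η z : ℂ}

lemma one_sub_norm_le_norm_one_sub_mul (hη : ‖η‖ ≤ 1) : 1 - ‖z‖ ≤ ‖1 - η * z‖ := by
  have : ‖η * z‖ ≤ ‖z‖ := by rw [norm_mul]; exact mul_le_of_le_one_left (norm_nonneg z) hη
  calc 1 - ‖z‖ ≤ ‖(1 : ℂ)‖ - ‖η * z‖ := by rw [norm_one]; linarith
    _ ≤ ‖1 - η * z‖ := norm_sub_norm_le _ _

lemma norm_one_sub_mul_le_two (hη : ‖η‖ ≤ 1) (hz : ‖z‖ ≤ 1) : ‖1 - η * z‖ ≤ 2 := by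
  calc ‖1 - η * z‖ ≤ ‖(1 : ℂ)‖ + ‖η‖ * ‖z‖ := (norm_sub_le _ _).trans_eq (by rw [norm_mul])
    _ ≤ 2 := by rw [norm_one]; nlinarith [norm_nonneg η, norm_nonneg z]

lemma norm_inv_one_sub_mul_le (hη : ‖η‖ ≤ 1) (hz : ‖z‖ < 1) :
    ‖(1 - η * z)⁻¹‖ ≤ (1 - ‖z‖)⁻¹ := by
  rw [norm_inv]
  exact inv_anti₀ (by linarith) (one_sub_norm_le_norm_one_sub_mul hη)

lemma re_one_sub_mul_pos (hη : ‖η‖ ≤ 1) (hz : ‖z‖ < 1) : 0 < (1 - η * z).re := by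
  have : (η * z).re ≤ ‖z‖ := (re_le_norm _).trans (by
    rw [norm_mul]; exact mul_le_of_le_one_left (norm_nonneg z) hη)
  rw [sub_re, one_re]
  linarith

end DiskBounds

lemma div_mem_slitPlane_of_re_pos {a b : ℂ} (ha : 0 < a.re) (hb : 0 < b.re) :
    a / b ∈ slitPlane := by
  rw [mem_slitPlane_iff_not_le_zero, le_def]
  rintro ⟨hre, him⟩
  rw [zero_re] at hre
  have hb0 : b ≠ 0 := fun h => by simp [h] at hb
  have : a.re = (a / b).re * b.re - (a / b).im * b.im := by
    rw [← mul_re, div_mul_cancel₀ _ hb0]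
  rw [him, zero_im, zero_mul, sub_zero] at this
  nlinarith

section Kernel

variable {ξ z : ℂ}

lemma norm_Jker_le (hξ : ‖ξ‖ ≤ 1) (hz : ‖z‖ < 1) :
    ‖Jker ξ z‖ ≤ Real.log 2 - Real.log (1 - ‖z‖) + Real.pi := by
  have hlog : ∀ η : ℂ, ‖η‖ ≤ 1 → ‖1 - η * z‖ ≠ 0 ∧
      Real.log (1 - ‖z‖) ≤ Real.log ‖1 - η * z‖ ∧ Real.log ‖1 - η * z‖ ≤ Real.log 2 := by
    intro η hη
    have hlb := one_sub_norm_le_norm_one_sub_mul (z := z) hη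
    exact ⟨by linarith, Real.log_le_log (by linarith) hlb,
      Real.log_le_log (by linarith) (norm_one_sub_mul_le_two hη hz.le)⟩
  obtain ⟨ha0, ha⟩ := hlog ξ hξ
  obtain ⟨hb0, hb⟩ := hlog (conj ξ) (by rwa [RCLike.norm_conj])
  have hre : |(Jker ξ z).re| ≤ Real.log 2 - Real.log (1 - ‖z‖) := by
    rw [Jker, log_re, norm_div, Real.log_div ha0 hb0]
    exact abs_sub_le_iff.2 ⟨by linarith, by linarith⟩
  calc ‖Jker ξ z‖ ≤ |(Jker ξ z).re| + |(Jker ξ z).im| := norm_le_abs_re_add_abs_im _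
    _ ≤ _ := add_le_add hre (by rw [Jker, log_im]; exact abs_arg_le_pi _)

lemma hasDerivAt_Jker (hξ : ‖ξ‖ ≤ 1) (hz : ‖z‖ < 1) :
    HasDerivAt (Jker ξ) ((1 - conj ξ * z)⁻¹ * conj ξ + (1 - ξ * z)⁻¹ * -ξ) z := by
  have hξ' : ‖conj ξ‖ ≤ 1 := by rwa [RCLike.norm_conj]
  have ha := re_one_sub_mul_pos hξ hz
  have hb := re_one_sub_mul_pos hξ' hz
  have ha0 : 1 - ξ * z ≠ 0 := fun h => by simp [h] at ha
  have hb0 : 1 - conj ξ * z ≠ 0 := fun h => by simp [h] at hb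
  have hnum : HasDerivAt (fun w : ℂ => 1 - ξ * w) (-ξ) z := by
    simpa using ((hasDerivAt_id z).const_mul ξ).const_sub 1
  have hden : HasDerivAt (fun w : ℂ => 1 - conj ξ * w) (-conj ξ) z := by
    simpa using ((hasDerivAt_id z).const_mul (conj ξ)).const_sub 1
  convert (hnum.div hden hb0).clog (div_mem_slitPlane_of_re_pos ha hb) using 1
  · rfl
  have ha0' : 1 - z * ξ ≠ 0 := by rwa [mul_comm]
  have hb0' : 1 - z * conj ξ ≠ 0 := by rwa [mul_comm]
  simp only [Pi.div_apply]
  field_simp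
  ring

lemma norm_deriv_Jker_le (hξ : ‖ξ‖ ≤ 1) (hz : ‖z‖ < 1) :
    ‖(1 - conj ξ * z)⁻¹ * conj ξ + (1 - ξ * z)⁻¹ * -ξ‖ ≤ 2 * (1 - ‖z‖)⁻¹ := by
  have hξ' : ‖conj ξ‖ ≤ 1 := by rwa [RCLike.norm_conj]
  have hterm : ∀ η : ℂ, ‖η‖ ≤ 1 → ‖(1 - η * z)⁻¹ * η‖ ≤ (1 - ‖z‖)⁻¹ := fun η hη => by
    rw [norm_mul]
    exact mul_le_of_le_one_right (norm_nonneg _) hη |>.trans (norm_inv_one_sub_mul_le hη hz)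
  calc _ ≤ ‖(1 - conj ξ * z)⁻¹ * conj ξ‖ + ‖(1 - ξ * z)⁻¹ * ξ‖ := by
        rw [mul_neg, ← sub_eq_add_neg]; exact norm_sub_le _ _
    _ ≤ 2 * (1 - ‖z‖)⁻¹ := by linarith [hterm _ hξ', hterm _ hξ]

lemma measurable_Jker_left (z : ℂ) : Measurable fun ξ => Jker ξ z := by
  unfold Jker; fun_prop

end Kernel

section Integral

variable {P : Measure ℂ} {w : ℂ → ℂ}

lemma integrable_inv_one_sub_mul_mul {a : ℂ → ℂ} (ha : Measurable a)
    (haP : ∀ᵐ ξ ∂P, ‖a ξ‖ ≤ 1) (hw : Integrable w P) {z : ℂ} (hz : ‖z‖ < 1) :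
    Integrable (fun ξ => (1 - a ξ * z)⁻¹ * w ξ) P :=
  hw.bdd_mul (by fun_prop) (haP.mono fun _ hξ => norm_inv_one_sub_mul_le hξ hz)

lemma hasDerivAt_integral_Jker (hP : ∀ᵐ ξ ∂P, ‖ξ‖ ≤ 1) (hw : Integrable w P) {z₀ : ℂ}
    (hz₀ : ‖z₀‖ < 1) :
    HasDerivAt (fun z => ∫ ξ, Jker ξ z * w ξ ∂P)
      ((∫ ξ, (1 - conj ξ * z₀)⁻¹ * (conj ξ * w ξ) ∂P) + ∫ ξ, (1 - ξ * z₀)⁻¹ * (-ξ * w ξ) ∂P)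
      z₀ := by
  have hP' : ∀ᵐ ξ ∂P, ‖conj ξ‖ ≤ 1 := hP.mono fun ξ h => by rwa [RCLike.norm_conj]
  have hball : ∀ z ∈ ball z₀ ((1 - ‖z₀‖) / 2),
      ‖z‖ < 1 ∧ 2 * (1 - ‖z‖)⁻¹ ≤ 4 * (1 - ‖z₀‖)⁻¹ := by
    intro z hz
    have hz' : ‖z‖ < (1 + ‖z₀‖) / 2 := by
      linarith [norm_le_norm_add_norm_sub' z z₀, mem_ball_iff_norm.1 hz]
    refine ⟨by linarith, ?_⟩
    rw [show 4 * (1 - ‖z₀‖)⁻¹ = 2 * ((1 - ‖z₀‖) / 2)⁻¹ by field_simp; norm_num]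
    gcongr
    linarith
  have hderiv := hasDerivAt_integral_of_dominated_loc_of_deriv_le
    (F := fun z ξ => Jker ξ z * w ξ)
    (F' := fun z ξ => ((1 - conj ξ * z)⁻¹ * conj ξ + (1 - ξ * z)⁻¹ * -ξ) * w ξ)
    (bound := fun ξ => 4 * (1 - ‖z₀‖)⁻¹ * ‖w ξ‖)
    (ball_mem_nhds z₀ (by linarith))
    (.of_forall fun z => (measurable_Jker_left z).aestronglyMeasurable.mul hw.1)
    (hw.bdd_mul (measurable_Jker_left z₀).aestronglyMeasurable
      (hP.mono fun _ hξ => norm_Jker_le hξ hz₀))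
    ((by fun_prop : Measurable _).aestronglyMeasurable.mul hw.1)
    (hP.mono fun ξ hξ z hz => by
      rw [norm_mul]
      exact mul_le_mul_of_nonneg_right
        ((norm_deriv_Jker_le hξ (hball z hz).1).trans (hball z hz).2) (norm_nonneg _))
    (hw.norm.const_mul _)
    (hP.mono fun ξ hξ z hz => (hasDerivAt_Jker hξ (hball z hz).1).mul_const (w ξ))
  have hsplit : (fun ξ => ((1 - conj ξ * z₀)⁻¹ * conj ξ + (1 - ξ * z₀)⁻¹ * -ξ) * w ξ) =
      fun ξ => (1 - conj ξ * z₀)⁻¹ * (conj ξ * w ξ) + (1 - ξ * z₀)⁻¹ * (-ξ * w ξ) := by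
    funext ξ; ring
  rw [← integral_add
    (integrable_inv_one_sub_mul_mul (by fun_prop) hP' (hw.bdd_mul (by fun_prop) hP') hz₀)
    (integrable_inv_one_sub_mul_mul (a := fun ξ => ξ) measurable_id hP
      (hw.bdd_mul (by fun_prop) (by simpa using hP)) hz₀), ← hsplit]
  exact hderiv.2

end Integral

section RnDeriv

variable {α E : Type*} [MeasurableSpace α] [NormedAddCommGroup E] [NormedSpace ℝ E]
  {μ ν : Measure α} [SigmaFinite μ] [SigmaFinite ν] {f g : α → E}

lemma integrable_rnDeriv_smul_add_rnDeriv_smul (hf : Integrable f μ) (hg : Integrable g ν) :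
    Integrable (fun x => (μ.rnDeriv (μ + ν) x).toReal • f x + (ν.rnDeriv (μ + ν) x).toReal • g x)
      (μ + ν) :=
  ((integrable_rnDeriv_smul_iff (Measure.AbsolutelyContinuous.rfl.add_right ν)).2 hf).add
    ((integrable_rnDeriv_smul_iff (Measure.AbsolutelyContinuous.rfl.add_right' μ)).2 hg)

lemma integral_rnDeriv_smul_add_rnDeriv_smul (hf : Integrable f μ) (hg : Integrable g ν) :
    ∫ x, ((μ.rnDeriv (μ + ν) x).toReal • f x + (ν.rnDeriv (μ + ν) x).toReal • g x) ∂(μ + ν) =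
      ∫ x, f x ∂μ + ∫ x, g x ∂ν := by
  have hμ : μ ≪ μ + ν := Measure.AbsolutelyContinuous.rfl.add_right ν
  have hν : ν ≪ μ + ν := Measure.AbsolutelyContinuous.rfl.add_right' μ
  rw [integral_add ((integrable_rnDeriv_smul_iff hμ).2 hf) ((integrable_rnDeriv_smul_iff hν).2 hg),
    integral_rnDeriv_smul hμ, integral_rnDeriv_smul hν]

end RnDeriv

section F1

variable {P : Measure ℂ} {w : ℂ → ℂ}

lemma MemF1.congr {g h : ℂ → ℂ} (hg : MemF1 g) (hgh : Set.EqOn g h (ball 0 1)) : MemF1 h := by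
  obtain ⟨P, w, hP, hcirc, hw, hg⟩ := hg
  exact ⟨P, w, hP, hcirc, hw, fun z hz => (hgh hz).symm.trans (hg z hz)⟩

lemma MemF1.add {g₁ g₂ : ℂ → ℂ} (h₁ : MemF1 g₁) (h₂ : MemF1 g₂) : MemF1 (g₁ + g₂) := by
  obtain ⟨P₁, w₁, _, hP₁, hw₁, hg₁⟩ := h₁
  obtain ⟨P₂, w₂, _, hP₂, hw₂, hg₂⟩ := h₂
  refine ⟨P₁ + P₂, fun ξ => (P₁.rnDeriv (P₁ + P₂) ξ).toReal • w₁ ξ +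
    (P₂.rnDeriv (P₁ + P₂) ξ).toReal • w₂ ξ, inferInstance, ae_add_measure_iff.2 ⟨hP₁, hP₂⟩,
    integrable_rnDeriv_smul_add_rnDeriv_smul hw₁ hw₂, fun z hz => ?_⟩
  have hkernel : ∀ {P : Measure ℂ} {w : ℂ → ℂ}, (∀ᵐ ξ ∂P, ‖ξ‖ = 1) → Integrable w P →
      Integrable (fun ξ => (1 - conj ξ * z)⁻¹ * w ξ) P := fun hP hw =>
    integrable_inv_one_sub_mul_mul continuous_conj.measurable
      (hP.mono fun ξ h => by rw [RCLike.norm_conj, h]) hw (mem_ball_zero_iff.1 hz)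
  rw [Pi.add_apply, hg₁ z hz, hg₂ z hz,
    ← integral_rnDeriv_smul_add_rnDeriv_smul (hkernel hP₁ hw₁) (hkernel hP₂ hw₂)]
  simp only [mul_add, mul_smul_comm]

lemma memF1_integral [IsFiniteMeasure P] (hP : ∀ᵐ ξ ∂P, ‖ξ‖ = 1) (hw : Integrable w P) :
    MemF1 fun z => ∫ ξ, (1 - conj ξ * z)⁻¹ * w ξ ∂P :=
  ⟨P, w, inferInstance, hP, hw, fun _ _ => rfl⟩

lemma memF1_integral_reflect [IsFiniteMeasure P] (hP : ∀ᵐ ξ ∂P, ‖ξ‖ = 1) (hw : Integrable w P) :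
    MemF1 fun z => ∫ ξ, (1 - ξ * z)⁻¹ * w ξ ∂P := by
  let e : ℂ ≃ᵐ ℂ := conjCLE.toHomeomorph.toMeasurableEquiv
  have he : ∀ ξ, e ξ = conj ξ := fun _ => rfl
  refine ⟨P.map e, w ∘ e, inferInstance, ?_, ?_, fun z _ => ?_⟩
  · rw [← e.map_ae]
    exact hP.mono fun ξ h => by simp [he, h]
  · rw [integrable_map_equiv]
    simpa [Function.comp_def, he] using hw
  · rw [integral_map_equiv]
    simp [he]

end F1

theorem stmt4 (f : ℂ → ℂ) (hf : MemJ f) : MemF1 (deriv f) := by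
  obtain ⟨P, w, _, hcirc, hw, hfJ⟩ := hf
  have hdisk : ∀ᵐ ξ ∂P, ‖ξ‖ ≤ 1 := hcirc.mono fun _ h => h.le
  have hconj : Integrable (fun ξ => conj ξ * w ξ) P :=
    hw.bdd_mul (by fun_prop) (by simpa using hdisk)
  have hneg : Integrable (fun ξ => -ξ * w ξ) P := hw.bdd_mul (by fun_prop) (by simpa using hdisk)
  refine ((memF1_integral hcirc hconj).add (memF1_integral_reflect hcirc hneg)).congr
    fun z hz => ?_
  have hf_eq : f =ᶠ[nhds z] fun z => ∫ ξ, Jker ξ z * w ξ ∂P :=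
    Filter.eventuallyEq_of_mem (isOpen_ball.mem_nhds hz) hfJ
  rw [hf_eq.deriv_eq, (hasDerivAt_integral_Jker hdisk hw (mem_ball_zero_iff.1 hz)).deriv]
  rfl
end
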